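/- Let H be a graph, let ℓ and p be positive integers, and set k = ℓp + ℓ + p. Let G be the graph obtained from H by attaching p pendant vertices (new vertices of degree 1) to each vertex of H and then adding k + 1 pairwise disjoint copies of the star K_{1, k−p−1}. Then vi(G) ≤ k if and only if there exists S ⊆ V(H) with |S| ≤ p such that every connected component of H − S has at most ℓ vertices. -/

import Mathlib

namespace VI

open SimpleGraph

variable {V : Type*}

/-- Total weight of a set of vertices. -/
noncomputable def setWeight (w : V → ℕ) (X : Set V) : ℕ := ∑ᶠ v ∈ X, w v

/-- Maximum weight of a connected component of `G − S`. -/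
noncomputable def compMax (G : SimpleGraph V) (w : V → ℕ) (S : Set V) : ℕ :=
  sSup {n | ∃ C : (G.induce Sᶜ).ConnectedComponent, n = setWeight w (Subtype.val '' C.supp)}

/-- `w(S) + max_{C ∈ cc(G−S)} w(V(C))`. -/
noncomputable def viCost (G : SimpleGraph V) (w : V → ℕ) (S : Set V) : ℕ :=
  setWeight w S + compMax G w S

/-- The weighted vertex integrity of `G`. -/
noncomputable def wvi (G : SimpleGraph V) (w : V → ℕ) : ℕ := ⨅ S : Set V, viCost G w S

/-- Maximum number of vertices of a connected component of `G − S`. -/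
noncomputable def uCompMax (G : SimpleGraph V) (S : Set V) : ℕ :=
  sSup {n | ∃ C : (G.induce Sᶜ).ConnectedComponent, n = C.supp.ncard}

/-- `|S| + max_{C ∈ cc(G−S)} |V(C)|`. -/
noncomputable def uViCost (G : SimpleGraph V) (S : Set V) : ℕ := S.ncard + uCompMax G S

/-- The (unweighted) vertex integrity of `G`. -/
noncomputable def uvi (G : SimpleGraph V) : ℕ := ⨅ S : Set V, uViCost G S

/-- A vertex `v` is redundant w.r.t. `S` if at most one connected component of `G − S`
contains a neighbor of `v`. -/
def Redundant (G : SimpleGraph V) (S : Set V) (v : V) : Prop :=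
  {C : (G.induce Sᶜ).ConnectedComponent | ∃ u : (Sᶜ : Set V), G.Adj v ↑u ∧ u ∈ C.supp}.Subsingleton

/-- `S` is irredundant if it contains no redundant vertex. -/
def Irredundant (G : SimpleGraph V) (S : Set V) : Prop := ∀ v ∈ S, ¬ Redundant G S v

end VI

namespace VI

/-- Vertices of the graph `G` built from `H`: the original vertices, `p` pendant vertices
attached to each original vertex, and `k + 1` copies of the star `K_{1, k-p-1}`
(`(j, none)` is the center of the `j`-th star and `(j, some i)` one of its leaves). -/
def PendVertex (V : Type*) (p k : ℕ) : Type _ :=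
  V ⊕ (V × Fin p) ⊕ (Fin (k + 1) × Option (Fin (k - p - 1)))

/-- The edges of the construction: the edges of `H`, a pendant edge from each pendant
vertex to its original vertex, and the star edges. -/
def pendRel {V : Type*} (H : SimpleGraph V) (p k : ℕ) :
    PendVertex V p k → PendVertex V p k → Prop
  | .inl u, .inl v => H.Adj u v
  | .inl u, .inr (.inl (v, _)) => u = v
  | .inr (.inr (j, none)), .inr (.inr (j', some _)) => j = j'
  | _, _ => False

/-- The graph obtained from `H` by attaching `p` pendant vertices to each vertex of `H`
and adding `k + 1` disjoint copies of `K_{1, k-p-1}`. -/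
def pendGraph {V : Type*} (H : SimpleGraph V) (p k : ℕ) : SimpleGraph (PendVertex V p k) :=
  SimpleGraph.fromRel (pendRel H p k)

end VI

/-! A deletion set `S'` of cost at most `k` misses one of the `k + 1` stars, which then is a
component with `k - p` vertices, so `|S'| ≤ p`. If `C` is a component of `H − S`, where `S` is
the set of original vertices in `S'`, then `C` and its pendant vertices, `|C| (p + 1)` vertices
in all, lie in `S'` or in a single component of `G − S'`; hence
`|C| (p + 1) ≤ k < (l + 1) (p + 1)`.
Conversely, the components of `G − S` are a component of `H − S` with its pendant vertices
(at most `l (p + 1) = k - p` vertices), isolated pendant vertices, and stars (`k - p` vertices). -/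

namespace VI
open SimpleGraph Set

section Components
variable {W : Type*} {G : SimpleGraph W}

lemma uvi_le_iff {n : ℕ} : uvi G ≤ n ↔ ∃ S, uViCost G S ≤ n := by
  refine ⟨fun h => ?_, fun ⟨S, hS⟩ => (ciInf_le (OrderBot.bddBelow _) S).trans hS⟩
  obtain ⟨S, hS⟩ := Nat.sInf_mem (range_nonempty (uViCost G))
  exact ⟨S, hS.trans_le h⟩

lemma le_uCompMax [Finite W] {S : Set W} (C : (G.induce Sᶜ).ConnectedComponent) :
    C.supp.ncard ≤ uCompMax G S := by
  refine le_csSup ⟨Nat.card W, ?_⟩ ⟨C, rfl⟩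
  rintro _ ⟨D, rfl⟩
  exact (ncard_le_card D.supp).trans (Finite.card_subtype_le _)

lemma uCompMax_le {S : Set W} {n : ℕ}
    (h : ∀ C : (G.induce Sᶜ).ConnectedComponent, C.supp.ncard ≤ n) : uCompMax G S ≤ n :=
  csSup_le' fun _ ⟨C, hC⟩ => hC ▸ h C

lemma mem_image_supp_of_adj {S : Set W} {C : (G.induce Sᶜ).ConnectedComponent} {a b : W}
    (ha : a ∈ Subtype.val '' C.supp) (hb : b ∉ S) (hab : G.Adj a b) :
    b ∈ Subtype.val '' C.supp := by
  obtain ⟨x, hx, rfl⟩ := ha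
  refine ⟨⟨b, hb⟩, ?_, rfl⟩
  rw [ConnectedComponent.mem_supp_iff] at hx ⊢
  rw [← hx, ConnectedComponent.eq]
  exact Adj.reachable (show (G.induce Sᶜ).Adj ⟨b, hb⟩ x from hab.symm)

lemma ncard_supp_le_of_closed {S T : Set W} (x : ↥Sᶜ) (hT : T.Finite) (hx : ↑x ∈ T)
    (hcl : ∀ a ∈ T, a ∉ S → ∀ b ∉ S, G.Adj a b → b ∈ T) :
    ((G.induce Sᶜ).connectedComponentMk x).supp.ncard ≤ T.ncard := by
  have walk_mem : ∀ {y z : ↥Sᶜ}, (G.induce Sᶜ).Walk y z → ↑y ∈ T → ↑z ∈ T := by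
    intro y z w
    induction w with
    | nil => exact id
    | @cons u v _ hadj _ ih => exact fun hu => ih (hcl u hu u.2 v v.2 hadj)
  rw [← ncard_image_of_injective _ Subtype.val_injective]
  refine ncard_le_ncard ?_ hT
  rintro _ ⟨y, hy, rfl⟩
  rw [ConnectedComponent.mem_supp_iff, ConnectedComponent.eq] at hy
  exact hy.symm.elim fun w => walk_mem w hx

lemma ncard_diff_le_ncard_supp [Finite W] {S T : Set W} (x : ↥Sᶜ)
    (hT : ∀ t ∈ T, ∀ ht : t ∉ S, (G.induce Sᶜ).Reachable x ⟨t, ht⟩) :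
    (T \ S).ncard ≤ ((G.induce Sᶜ).connectedComponentMk x).supp.ncard := by
  rw [← ncard_image_of_injective _ Subtype.val_injective]
  refine ncard_le_ncard ?_ (toFinite _)
  rintro t ⟨htT, htS⟩
  refine ⟨⟨t, htS⟩, ?_, rfl⟩
  rw [ConnectedComponent.mem_supp_iff, ConnectedComponent.eq]
  exact (hT t htT htS).symm

end Components

section PendGraph
variable {V : Type*} {H : SimpleGraph V} {p k : ℕ}

instance [Finite V] : Finite (PendVertex V p k) :=
  inferInstanceAs (Finite (V ⊕ (V × Fin p) ⊕ (Fin (k + 1) × Option (Fin (k - p - 1)))))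

def pendOf : V × Option (Fin p) → PendVertex V p k
  | (v, none) => .inl v
  | (v, some i) => .inr (.inl (v, i))

def starVertex (j : Fin (k + 1)) : Option (Fin (k - p - 1)) → PendVertex V p k :=
  fun o => .inr (.inr (j, o))

lemma pendOf_injective :
    Function.Injective (pendOf : V × Option (Fin p) → PendVertex V p k) := by
  rintro ⟨v, _ | i⟩ ⟨w, _ | j⟩ h <;> simp_all [pendOf, PendVertex]

lemma ncard_image_pendOf (B : Set V) :
    ((pendOf : _ → PendVertex V p k) '' (B ×ˢ univ)).ncard = B.ncard * (p + 1) := by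
  rw [ncard_image_of_injective _ pendOf_injective, ncard_prod, ncard_univ]
  simp

lemma ncard_range_starVertex (hpk : p < k) (j : Fin (k + 1)) :
    (range (starVertex (V := V) (p := p) j)).ncard = k - p := by
  rw [← image_univ, ncard_image_of_injective _
    (fun o o' h => by simpa [starVertex, PendVertex] using h), ncard_univ]
  simp
  omega

lemma pendGraph_adj {a b : PendVertex V p k} :
    (pendGraph H p k).Adj a b ↔ a ≠ b ∧ (pendRel H p k a b ∨ pendRel H p k b a) :=
  fromRel_adj ..

lemma pendGraph_adj_inl_inl {u v : V} :
    (pendGraph H p k).Adj (.inl u) (.inl v) ↔ H.Adj u v :=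
  pendGraph_adj.trans <| by simpa [pendRel, PendVertex, H.adj_comm] using H.ne_of_adj

lemma pendGraph_adj_inl_pendant (v : V) (i : Fin p) :
    (pendGraph H p k).Adj (.inl v) (.inr (.inl (v, i))) :=
  pendGraph_adj.mpr <| by simp [pendRel, PendVertex]

lemma pendGraph_adj_star_center (j : Fin (k + 1)) (i : Fin (k - p - 1)) :
    (pendGraph H p k).Adj (starVertex j none) (starVertex j (some i)) :=
  pendGraph_adj.mpr <| by simp [starVertex, pendRel, PendVertex]

lemma eq_of_pendGraph_adj_pendant {v : V} {i : Fin p} {b : PendVertex V p k}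
    (h : (pendGraph H p k).Adj (.inr (.inl (v, i))) b) : b = .inl v := by
  replace h := pendGraph_adj.mp h
  rcases b with w | ⟨w, i'⟩ | ⟨j, _ | i'⟩ <;> simp_all [pendRel, PendVertex]

lemma exists_of_pendGraph_adj_inl {v : V} {b : PendVertex V p k}
    (h : (pendGraph H p k).Adj (.inl v) b) :
    (∃ w, b = .inl w ∧ H.Adj v w) ∨ ∃ i, b = .inr (.inl (v, i)) := by
  rcases b with w | ⟨w, i'⟩ | ⟨j, _ | i'⟩
  · exact .inl ⟨w, rfl, pendGraph_adj_inl_inl.mp h⟩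
  all_goals replace h := pendGraph_adj.mp h; simp_all [pendRel, PendVertex]

lemma exists_of_pendGraph_adj_star {j : Fin (k + 1)} {o : Option (Fin (k - p - 1))}
    {b : PendVertex V p k} (h : (pendGraph H p k).Adj (starVertex j o) b) :
    ∃ o', b = starVertex j o' := by
  replace h := pendGraph_adj.mp h
  rcases b with w | ⟨w, i'⟩ | ⟨j', _ | i'⟩ <;> rcases o with _ | i <;>
    simp_all [starVertex, pendRel, PendVertex]

lemma pendOf_image_closed {S B : Set V} (hB : ∀ v ∈ B, ∀ w ∉ S, H.Adj v w → w ∈ B) :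
    ∀ a ∈ (pendOf : _ → PendVertex V p k) '' (B ×ˢ univ), a ∉ Sum.inl '' S →
      ∀ b ∉ (Sum.inl '' S : Set (PendVertex V p k)), (pendGraph H p k).Adj a b →
        b ∈ pendOf '' (B ×ˢ univ) := by
  rintro _ ⟨⟨v, _ | i⟩, ⟨hv, -⟩, rfl⟩ - b hb hab
  · rcases exists_of_pendGraph_adj_inl hab with ⟨w, rfl, hvw⟩ | ⟨i, rfl⟩
    · exact ⟨(w, none), ⟨hB v hv w (fun hw => hb ⟨w, hw, rfl⟩) hvw, trivial⟩, rfl⟩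
    · exact ⟨(v, some i), ⟨hv, trivial⟩, rfl⟩
  · obtain rfl := eq_of_pendGraph_adj_pendant hab
    exact ⟨(v, none), ⟨hv, trivial⟩, rfl⟩

lemma exists_starVertex_not_mem [Finite V] {S' : Set (PendVertex V p k)} (h : S'.ncard ≤ k) :
    ∃ j, ∀ o, starVertex j o ∉ S' := by
  by_contra! hall
  choose o ho using hall
  have := ncard_le_ncard_of_injOn (s := univ) (fun j => starVertex j (o j))
    (fun j _ => ho j) (fun j _ j' _ hj => (by simpa [starVertex, PendVertex] using hj : _ ∧ _).1)
  simp at this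
  exact absurd h this.not_ge

lemma sub_le_uCompMax_of_starVertex_not_mem [Finite V] (hpk : p < k)
    {S' : Set (PendVertex V p k)} {j : Fin (k + 1)} (hj : ∀ o, starVertex j o ∉ S') :
    k - p ≤ uCompMax (pendGraph H p k) S' := by
  have hstar := ncard_diff_le_ncard_supp (G := pendGraph H p k) ⟨_, hj none⟩
    (T := range (starVertex j)) <| by
      rintro _ ⟨_ | i, rfl⟩ ht
      · rfl
      · exact Adj.reachable (show ((pendGraph H p k).induce S'ᶜ).Adj _ _ from
          pendGraph_adj_star_center j i)
  rw [sdiff_eq_left.mpr (Set.disjoint_left.mpr (by rintro _ ⟨o, rfl⟩; exact hj o)),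
    ncard_range_starVertex hpk] at hstar
  exact hstar.trans (le_uCompMax _)

lemma reachable_inl_of_reachable {S' : Set (PendVertex V p k)}
    {u w : ↥(Sum.inl ⁻¹' S')ᶜ} (h : (H.induce (Sum.inl ⁻¹' S')ᶜ).Reachable u w) :
    ((pendGraph H p k).induce S'ᶜ).Reachable ⟨.inl u, u.2⟩ ⟨.inl w, w.2⟩ :=
  h.map (⟨fun z => ⟨.inl z, z.2⟩, fun h => pendGraph_adj_inl_inl.mpr h⟩ :
    H.induce (Sum.inl ⁻¹' S')ᶜ →g (pendGraph H p k).induce S'ᶜ)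

lemma ncard_supp_mul_le_uViCost [Finite V] (S' : Set (PendVertex V p k))
    (C : (H.induce (Sum.inl ⁻¹' S')ᶜ).ConnectedComponent) :
    C.supp.ncard * (p + 1) ≤ uViCost (pendGraph H p k) S' := by
  induction C using ConnectedComponent.ind with | h u => ?_
  set B := Subtype.val '' ((H.induce (Sum.inl ⁻¹' S')ᶜ).connectedComponentMk u).supp
  have hreach := ncard_diff_le_ncard_supp (G := pendGraph H p k) (S := S') ⟨.inl u, u.2⟩
      (T := pendOf '' (B ×ˢ univ)) <| by
    rintro _ ⟨⟨_, o⟩, ⟨⟨w, hw, rfl⟩, -⟩, rfl⟩ ht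
    rw [ConnectedComponent.mem_supp_iff, ConnectedComponent.eq] at hw
    have huw := reachable_inl_of_reachable hw.symm
    cases o with
    | none => exact huw
    | some i =>
      exact huw.trans <| Adj.reachable (show ((pendGraph H p k).induce S'ᶜ).Adj ⟨.inl w, w.2⟩
        ⟨_, ht⟩ from pendGraph_adj_inl_pendant w.1 i)
  calc _ = (pendOf '' (B ×ˢ univ)).ncard := by
        rw [ncard_image_pendOf, ncard_image_of_injective _ Subtype.val_injective]
    _ ≤ (pendOf '' (B ×ˢ univ) \ S').ncard + S'.ncard := ncard_le_ncard_sdiff_add_ncard _ _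
    _ ≤ uCompMax _ S' + S'.ncard := by gcongr; exact hreach.trans (le_uCompMax _)
    _ = _ := add_comm ..

lemma ncard_supp_pendOf_le [Finite V] {S : Set V} {v : V} (hv : v ∉ S) (o : Option (Fin p))
    (hx : pendOf (v, o) ∉ (Sum.inl '' S : Set (PendVertex V p k))) :
    (((pendGraph H p k).induce (Sum.inl '' S)ᶜ).connectedComponentMk ⟨_, hx⟩).supp.ncard ≤
      ((H.induce Sᶜ).connectedComponentMk ⟨v, hv⟩).supp.ncard * (p + 1) := by
  set C := (H.induce Sᶜ).connectedComponentMk ⟨v, hv⟩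
  refine (ncard_supp_le_of_closed (T := pendOf '' ((Subtype.val '' C.supp) ×ˢ univ)) _
    (toFinite _) ⟨(v, o), ⟨⟨⟨v, hv⟩, rfl, rfl⟩, trivial⟩, rfl⟩
    (pendOf_image_closed fun _ ha _ hb hab => mem_image_supp_of_adj ha hb hab)).trans ?_
  rw [ncard_image_pendOf, ncard_image_of_injective _ Subtype.val_injective]

lemma uCompMax_pendGraph_le [Finite V] {l : ℕ} (hl : 0 < l) (hk : k = l * p + l + p)
    {S : Set V} (hS : ∀ C : (H.induce Sᶜ).ConnectedComponent, C.supp.ncard ≤ l) :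
    uCompMax (pendGraph H p k) (Sum.inl '' S) ≤ k - p := by
  have hkp : k - p = l * (p + 1) := by rw [hk, Nat.add_sub_cancel]; ring
  refine uCompMax_le fun D => ?_
  induction D using ConnectedComponent.ind with | h x => ?_
  obtain ⟨x, hx⟩ := x
  rcases x with v | ⟨v, i⟩ | ⟨j, o⟩
  · have hv : v ∉ S := fun hv => hx ⟨v, hv, rfl⟩
    exact (ncard_supp_pendOf_le hv none hx).trans (hkp ▸ Nat.mul_le_mul_right _ (hS _))
  · by_cases hv : v ∈ S
    · refine (ncard_supp_le_of_closed _ (finite_singleton _) rfl ?_).trans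
        ((ncard_singleton _).trans_le (by omega))
      rintro a rfl - b hb hab
      exact absurd ⟨v, hv, (eq_of_pendGraph_adj_pendant hab).symm⟩ hb
    · exact (ncard_supp_pendOf_le hv (some i) hx).trans (hkp ▸ Nat.mul_le_mul_right _ (hS _))
  · refine (ncard_supp_le_of_closed (T := range (starVertex j)) _ (toFinite _) ⟨o, rfl⟩
      ?_).trans (ncard_range_starVertex (by omega) j).le
    rintro _ ⟨o', rfl⟩ - b - hab
    obtain ⟨o'', rfl⟩ := exists_of_pendGraph_adj_star hab
    exact mem_range_self o''

end PendGraph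

end VI

open VI SimpleGraph in
theorem statement10 {V : Type*} [Fintype V] (H : SimpleGraph V) (l p k : ℕ)
    (hl : 0 < l) (hk : k = l * p + l + p) :
    uvi (pendGraph H p k) ≤ k ↔
      ∃ S : Set V, S.ncard ≤ p ∧
        ∀ C : (H.induce Sᶜ).ConnectedComponent, C.supp.ncard ≤ l := by
  rw [uvi_le_iff]
  constructor
  · rintro ⟨S', hS'⟩
    obtain ⟨j, hj⟩ := exists_starVertex_not_mem (le_of_add_le_left hS')
    have hstar := sub_le_uCompMax_of_starVertex_not_mem (H := H) (by omega) hj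
    refine ⟨Sum.inl ⁻¹' S', ?_, fun C => ?_⟩
    · have hpre : (Sum.inl ⁻¹' S').ncard ≤ S'.ncard :=
        Set.ncard_le_ncard_of_injOn Sum.inl (fun _ ha => ha) Sum.inl_injective.injOn
      rw [uViCost] at hS'
      omega
    · have := ncard_supp_mul_le_uViCost S' C
      nlinarith
  · rintro ⟨S, hS, hC⟩
    have := uCompMax_pendGraph_le hl hk hC
    refine ⟨Sum.inl '' S, ?_⟩
    have hcard : (Sum.inl '' S : Set (PendVertex V p k)).ncard = S.ncard :=
      Set.ncard_image_of_injective _ Sum.inl_injective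
    rw [uViCost, hcard]
    omega
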